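/- Let P₁ be Hermitian positive semidefinite, P₂ positive semidefinite, with A = P₁ + P₂ positive definite, and Σ Hermitian positive definite. Then the spectral radius of the PPS iteration matrix Γ = (Σ + P₁)^{-1}(Σ - P₂)(Σ + P₂)^{-1}(Σ - P₁) is strictly less than 1. -/

import Mathlib

open Matrix ComplexOrder

noncomputable def specNorm {n : ℕ} (M : Matrix (Fin n) (Fin n) ℂ) : ℝ :=
  ‖Matrix.toEuclideanCLM (𝕜 := ℂ) M‖

noncomputable def evnorm {n : ℕ} (x : Fin n → ℂ) : ℝ :=
  ‖(WithLp.equiv 2 (Fin n → ℂ)).symm x‖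

/-- `P` is positive semidefinite in the (possibly non-Hermitian) sense:
`Re (x* P x) ≥ 0` for all `x`. -/
def IsPSD {n : ℕ} (P : Matrix (Fin n) (Fin n) ℂ) : Prop :=
  ∀ x : Fin n → ℂ, 0 ≤ (star x ⬝ᵥ P *ᵥ x).re

/-- `P` is positive definite in the (possibly non-Hermitian) sense:
`Re (x* P x) > 0` for all nonzero `x`. -/
def IsPD {n : ℕ} (P : Matrix (Fin n) (Fin n) ℂ) : Prop :=
  ∀ x : Fin n → ℂ, x ≠ 0 → 0 < (star x ⬝ᵥ P *ᵥ x).re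

/-- The square root of a PSD matrix, as `Matrix.PosSemidef.sqrt` was defined in older Mathlib. -/
noncomputable def psdSqrt {n : ℕ} {A : Matrix (Fin n) (Fin n) ℂ} (hA : A.PosSemidef) :
    Matrix (Fin n) (Fin n) ℂ :=
  hA.1.eigenvectorUnitary.1 * diagonal ((↑) ∘ (√·) ∘ hA.1.eigenvalues) *
    (star hA.1.eigenvectorUnitary : Matrix (Fin n) (Fin n) ℂ)

/-- `Σ^{-1/2} P Σ^{-1/2}` where `Σ^{1/2}` is the HPD square root of the HPD matrix `Sg`. -/
noncomputable def tild {n : ℕ} (Sg P : Matrix (Fin n) (Fin n) ℂ) (hS : Sg.PosDef) :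
    Matrix (Fin n) (Fin n) ℂ :=
  (psdSqrt hS.posSemidef)⁻¹ * P * (psdSqrt hS.posSemidef)⁻¹

lemma psdSqrt_posSemidef {n : ℕ} {A : Matrix (Fin n) (Fin n) ℂ} (hA : A.PosSemidef) :
    (psdSqrt hA).PosSemidef := by
  unfold psdSqrt
  have hD : (diagonal (((↑) ∘ (√·) ∘ hA.1.eigenvalues : Fin n → ℂ))).PosSemidef :=
    Matrix.posSemidef_diagonal_iff.mpr fun i =>
      Complex.zero_le_real.mpr (Real.sqrt_nonneg _)
  exact hD.mul_mul_conjTranspose_same _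

lemma psdSqrt_mul_self {n : ℕ} {A : Matrix (Fin n) (Fin n) ℂ} (hA : A.PosSemidef) :
    psdSqrt hA * psdSqrt hA = A := by
  unfold psdSqrt
  have hU : (star hA.1.eigenvectorUnitary : Matrix (Fin n) (Fin n) ℂ) *
      hA.1.eigenvectorUnitary.1 = 1 := Unitary.coe_star_mul_self _
  have hDD : diagonal (((↑) ∘ (√·) ∘ hA.1.eigenvalues : Fin n → ℂ)) *
      diagonal (((↑) ∘ (√·) ∘ hA.1.eigenvalues : Fin n → ℂ)) =
      diagonal ((RCLike.ofReal ∘ hA.1.eigenvalues : Fin n → ℂ)) := by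
    rw [diagonal_mul_diagonal]
    congr 1
    funext i
    simp only [Function.comp_apply]
    rw [← Complex.ofReal_mul, Real.mul_self_sqrt (hA.eigenvalues_nonneg i)]
    rfl
  conv_rhs => rw [hA.1.spectral_theorem, Unitary.conjStarAlgAut_apply]
  rw [← hDD]
  simp only [mul_assoc]
  rw [← mul_assoc (star _ : Matrix (Fin n) (Fin n) ℂ) _ _, hU, one_mul]

section AuxPPS

variable {n : ℕ}

lemma dot_self_eq (v : Fin n → ℂ) :
    star v ⬝ᵥ v = ((∑ i, Complex.normSq (v i) : ℝ) : ℂ) := by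
  push_cast
  simp only [dotProduct, Pi.star_apply]
  refine Finset.sum_congr rfl fun i _ => ?_
  rw [Complex.normSq_eq_conj_mul_self]
  rfl

lemma dot_self_re_nonneg (v : Fin n → ℂ) : 0 ≤ (star v ⬝ᵥ v).re := by
  rw [dot_self_eq, Complex.ofReal_re]
  exact Finset.sum_nonneg fun i _ => Complex.normSq_nonneg _

lemma dot_self_re_pos {v : Fin n → ℂ} (hv : v ≠ 0) : 0 < (star v ⬝ᵥ v).re := by
  rw [dot_self_eq, Complex.ofReal_re]
  obtain ⟨i, hi⟩ := Function.ne_iff.mp hv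
  exact Finset.sum_pos' (fun i _ => Complex.normSq_nonneg _)
    ⟨i, Finset.mem_univ i, Complex.normSq_pos.mpr hi⟩

lemma re_dot_comm (v w : Fin n → ℂ) : (star v ⬝ᵥ w).re = (star w ⬝ᵥ v).re := by
  rw [Matrix.star_dotProduct]
  exact Complex.conj_re _

lemma cayley_identity (P : Matrix (Fin n) (Fin n) ℂ) (y : Fin n → ℂ) :
    (star ((1 - P) *ᵥ y) ⬝ᵥ ((1 - P) *ᵥ y)).re
      = (star ((1 + P) *ᵥ y) ⬝ᵥ ((1 + P) *ᵥ y)).re - 4 * (star y ⬝ᵥ P *ᵥ y).re := by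
  have h1 : (1 + P) *ᵥ y = y + P *ᵥ y := by rw [Matrix.add_mulVec, Matrix.one_mulVec]
  have h2 : (1 - P) *ᵥ y = y - P *ᵥ y := by rw [Matrix.sub_mulVec, Matrix.one_mulVec]
  rw [h1, h2]
  simp only [star_add, star_sub, dotProduct_add, dotProduct_sub, add_dotProduct,
    sub_dotProduct, Complex.add_re, Complex.sub_re]
  linarith [re_dot_comm (P *ᵥ y) y]

lemma q_smul (μ : ℂ) (v : Fin n → ℂ) :
    (star (μ • v) ⬝ᵥ (μ • v)).re = Complex.normSq μ * (star v ⬝ᵥ v).re := by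
  rw [star_smul, smul_dotProduct, dotProduct_smul, smul_eq_mul, smul_eq_mul,
    ← mul_assoc, Complex.star_def, ← Complex.normSq_eq_conj_mul_self]
  exact Complex.re_ofReal_mul _ _

lemma quad_conj (B M : Matrix (Fin n) (Fin n) ℂ) (hB : B.IsHermitian) (x : Fin n → ℂ) :
    star x ⬝ᵥ (B * M * B) *ᵥ x = star (B *ᵥ x) ⬝ᵥ M *ᵥ (B *ᵥ x) := by
  rw [← Matrix.mulVec_mulVec, ← Matrix.mulVec_mulVec, dotProduct_mulVec,
    show star x ᵥ* B = star (B *ᵥ x) from by rw [Matrix.star_mulVec, hB.eq]]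

lemma isPD_isUnit {M : Matrix (Fin n) (Fin n) ℂ} (h : IsPD M) : IsUnit M := by
  rw [← Matrix.mulVec_injective_iff_isUnit]
  intro v w hvw
  by_contra hne
  have hsub : M *ᵥ (v - w) = 0 := by
    rw [Matrix.mulVec_sub, hvw, sub_self]
  have := h (v - w) (sub_ne_zero.mpr hne)
  rw [hsub, dotProduct_zero] at this
  simp at this

/-- Core eigenvalue bound for the one-step PPS iteration matrix, in normalized form. -/
lemma pps_eig_bound {Q1 Q2 : Matrix (Fin n) (Fin n) ℂ}
    (hQ1 : Q1.PosSemidef) (hQ2 : IsPSD Q2) (hQA : IsPD (Q1 + Q2))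
    {μ : ℂ} (hμ : μ ∈ spectrum ℂ ((1 + Q1)⁻¹ * (1 - Q2) * (1 + Q2)⁻¹ * (1 - Q1))) :
    (‖μ‖₊ : ENNReal) < 1 := by
  classical
  set G' : Matrix (Fin n) (Fin n) ℂ := (1 + Q1)⁻¹ * (1 - Q2) * (1 + Q2)⁻¹ * (1 - Q1) with hG'
  have hQ1psd : IsPSD Q1 := fun x => by
    have := hQ1.dotProduct_mulVec_nonneg x
    exact (Complex.le_def.mp this).1
  -- invertibility of 1 + Q1, 1 + Q2
  have hPD1 : IsPD (1 + Q1) := by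
    intro v hv
    rw [Matrix.add_mulVec, Matrix.one_mulVec, dotProduct_add, Complex.add_re]
    have := hQ1psd v
    have := dot_self_re_pos hv
    linarith
  have hPD2 : IsPD (1 + Q2) := by
    intro v hv
    rw [Matrix.add_mulVec, Matrix.one_mulVec, dotProduct_add, Complex.add_re]
    have := hQ2 v
    have := dot_self_re_pos hv
    linarith
  have hU1 : IsUnit (1 + Q1) := isPD_isUnit hPD1
  have hU2 : IsUnit (1 + Q2) := isPD_isUnit hPD2
  have hd1 : IsUnit (1 + Q1).det := (Matrix.isUnit_iff_isUnit_det _).mp hU1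
  have hd2 : IsUnit (1 + Q2).det := (Matrix.isUnit_iff_isUnit_det _).mp hU2
  -- eigenvector
  have hμ' : Module.End.HasEigenvalue (Matrix.toLinAlgEquiv' G') μ := by
    apply Module.End.hasEigenvalue_iff_mem_spectrum.mpr
    rw [AlgEquiv.spectrum_eq (Matrix.toLinAlgEquiv' (R := ℂ) (n := Fin n)) G']
    exact hμ
  obtain ⟨x, hx⟩ := hμ'.exists_hasEigenvector
  have hxne : x ≠ 0 := hx.2
  have heig : G' *ᵥ x = μ • x := by
    rw [← Matrix.toLinAlgEquiv'_apply]
    exact hx.apply_eq_smul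
  set b : Fin n → ℂ := (1 + Q2)⁻¹ *ᵥ ((1 - Q1) *ᵥ x) with hbdef
  have E1 : (1 + Q2) *ᵥ b = (1 - Q1) *ᵥ x := by
    rw [hbdef, Matrix.mulVec_mulVec, Matrix.mul_nonsing_inv _ hd2, Matrix.one_mulVec]
  have E2 : (1 - Q2) *ᵥ b = μ • ((1 + Q1) *ᵥ x) := by
    have h0 : (1 + Q1)⁻¹ *ᵥ ((1 - Q2) *ᵥ b) = μ • x := by
      rw [hbdef, Matrix.mulVec_mulVec, Matrix.mulVec_mulVec, Matrix.mulVec_mulVec]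
      exact heig
    have h1 := congrArg (fun v => (1 + Q1) *ᵥ v) h0
    rw [Matrix.mulVec_mulVec, Matrix.mul_nonsing_inv _ hd1, Matrix.one_mulVec,
      Matrix.mulVec_smul] at h1
    exact h1
  -- numeric chain
  set C : ℝ := (star ((1 + Q1) *ᵥ x) ⬝ᵥ ((1 + Q1) *ᵥ x)).re with hC
  set r1 : ℝ := (star x ⬝ᵥ Q1 *ᵥ x).re with hr1
  set r2 : ℝ := (star b ⬝ᵥ Q2 *ᵥ b).re with hr2
  have hr1nn : 0 ≤ r1 := hQ1psd x
  have hr2nn : 0 ≤ r2 := hQ2 b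
  have hCpos : 0 < C := by
    apply dot_self_re_pos
    intro h
    apply hxne
    have hinj : Function.Injective (1 + Q1).mulVec := Matrix.mulVec_injective_iff_isUnit.mpr hU1
    apply hinj
    rw [h, Matrix.mulVec_zero]
  have chain : Complex.normSq μ * C = C - 4 * r1 - 4 * r2 := by
    have n1 := cayley_identity Q2 b
    rw [E1, E2, q_smul] at n1
    have n2 := cayley_identity Q1 x
    rw [← hC, ← hr1] at n2
    rw [n2, ← hr2] at n1
    linarith
  have hle : Complex.normSq μ ≤ 1 := by nlinarith
  have hne1 : Complex.normSq μ ≠ 1 := by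
    intro heq
    rw [heq, one_mul] at chain
    have hr1z : r1 = 0 := by linarith
    have hr2z : r2 = 0 := by linarith
    -- Q1 x = 0
    have hQ1x : Q1 *ᵥ x = 0 := by
      apply (hQ1.dotProduct_mulVec_zero_iff x).mp
      have hz : 0 ≤ star x ⬝ᵥ Q1 *ᵥ x := hQ1.dotProduct_mulVec_nonneg x
      have him := (Complex.le_def.mp hz).2
      exact Complex.ext (by rw [← hr1, hr1z]; simp) (by rw [← him])
    have hE1' : b + Q2 *ᵥ b = x := by
      have := E1
      rw [Matrix.add_mulVec, Matrix.one_mulVec, Matrix.sub_mulVec, Matrix.one_mulVec,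
        hQ1x, sub_zero] at this
      exact this
    have hE2' : b - Q2 *ᵥ b = μ • x := by
      have := E2
      rw [Matrix.sub_mulVec, Matrix.one_mulVec, Matrix.add_mulVec, Matrix.one_mulVec,
        hQ1x, add_zero] at this
      exact this
    have hbne : b ≠ 0 := by
      intro hb
      rw [hb] at hE1'
      simp only [Matrix.mulVec_zero, add_zero] at hE1'
      exact hxne hE1'.symm
    have h2b : (2 : ℂ) • b = (1 + μ) • x := by
      calc (2 : ℂ) • b = (b + Q2 *ᵥ b) + (b - Q2 *ᵥ b) := by module
        _ = x + μ • x := by rw [hE1', hE2']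
        _ = (1 + μ) • x := by module
    have hQ1b : Q1 *ᵥ b = 0 := by
      have h := congrArg (fun v => Q1 *ᵥ v) h2b
      simp only [Matrix.mulVec_smul, hQ1x, smul_zero] at h
      have := smul_eq_zero.mp h
      rcases this with h' | h'
      · norm_num at h'
      · exact h'
    have hpos := hQA b hbne
    rw [Matrix.add_mulVec, hQ1b, zero_add] at hpos
    rw [← hr2] at hpos
    linarith
  have hlt : Complex.normSq μ < 1 := lt_of_le_of_ne hle hne1
  have habs : ‖μ‖ < 1 := by
    have h2 : ‖μ‖ ^ 2 < 1 := by
      rw [Complex.sq_norm]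
      exact hlt
    nlinarith [norm_nonneg μ]
  rw [← ENNReal.coe_one, ENNReal.coe_lt_coe, ← NNReal.coe_lt_coe, coe_nnnorm,
    NNReal.coe_one]
  exact habs

end AuxPPS

theorem stmt11 {n : ℕ} (P1 P2 A Sg : Matrix (Fin n) (Fin n) ℂ)
    (h1 : P1.PosSemidef) (h2 : IsPSD P2) (hA : A = P1 + P2) (hApd : IsPD A)
    (hS : Sg.PosDef) :
    spectralRadius ℂ ((Sg + P1)⁻¹ * (Sg - P2) * (Sg + P2)⁻¹ * (Sg - P1)) < 1 := by
  classical
  set S : Matrix (Fin n) (Fin n) ℂ := psdSqrt hS.posSemidef with hSdef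
  have hSps : S.PosSemidef := psdSqrt_posSemidef hS.posSemidef
  have hSH : S.IsHermitian := hSps.1
  have hSS : S * S = Sg := psdSqrt_mul_self hS.posSemidef
  have hdetS : IsUnit S.det := by
    have hmul : S.det * S.det = Sg.det := by rw [← Matrix.det_mul, hSS]
    have hg : Sg.det ≠ 0 := hS.det_pos.ne'
    refine isUnit_iff_ne_zero.mpr fun h0 => hg ?_
    rw [← hmul, h0, zero_mul]
  have hSU : IsUnit S := (Matrix.isUnit_iff_isUnit_det S).mpr hdetS
  have hS1 : S * S⁻¹ = 1 := Matrix.mul_nonsing_inv S hdetS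
  have hS2 : S⁻¹ * S = 1 := Matrix.nonsing_inv_mul S hdetS
  have hSiH : (S⁻¹).IsHermitian := hSH.inv
  set Q1 : Matrix (Fin n) (Fin n) ℂ := S⁻¹ * P1 * S⁻¹ with hQ1def
  set Q2 : Matrix (Fin n) (Fin n) ℂ := S⁻¹ * P2 * S⁻¹ with hQ2def
  -- transformed positivity
  have hQ1 : Q1.PosSemidef := by
    have h := h1.conjTranspose_mul_mul_same (B := S⁻¹)
    rw [hSiH.eq] at h
    exact h
  have hquad : ∀ (M : Matrix (Fin n) (Fin n) ℂ) (x : Fin n → ℂ),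
      star x ⬝ᵥ (S⁻¹ * M * S⁻¹) *ᵥ x = star (S⁻¹ *ᵥ x) ⬝ᵥ M *ᵥ (S⁻¹ *ᵥ x) :=
    fun M x => quad_conj S⁻¹ M hSiH x
  have hQ2 : IsPSD Q2 := fun x => by rw [hQ2def, hquad]; exact h2 _
  have hTinj : Function.Injective (S⁻¹).mulVec :=
    Matrix.mulVec_injective_iff_isUnit.mpr (Matrix.isUnit_nonsing_inv_iff.mpr hSU)
  have hQA : IsPD (Q1 + Q2) := by
    intro x hx
    have hsum : Q1 + Q2 = S⁻¹ * A * S⁻¹ := by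
      rw [hA, hQ1def, hQ2def, Matrix.mul_add, Matrix.add_mul]
    rw [hsum, hquad]
    refine hApd _ fun h0 => hx ?_
    apply hTinj
    rw [h0, Matrix.mulVec_zero]
  -- similarity
  set G : Matrix (Fin n) (Fin n) ℂ := (Sg + P1)⁻¹ * (Sg - P2) * (Sg + P2)⁻¹ * (Sg - P1)
    with hG
  set G' : Matrix (Fin n) (Fin n) ℂ := (1 + Q1)⁻¹ * (1 - Q2) * (1 + Q2)⁻¹ * (1 - Q1)
    with hG'
  have cancel1 : ∀ M : Matrix (Fin n) (Fin n) ℂ, S * (S⁻¹ * M) = M := fun M => by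
    rw [← mul_assoc, hS1, one_mul]
  have cancel2 : ∀ M : Matrix (Fin n) (Fin n) ℂ, S⁻¹ * (S * M) = M := fun M => by
    rw [← mul_assoc, hS2, one_mul]
  have key : ∀ M : Matrix (Fin n) (Fin n) ℂ, S * (S⁻¹ * M * S⁻¹) * S = M := fun M => by
    rw [show S⁻¹ * M * S⁻¹ = S⁻¹ * (M * S⁻¹) from by rw [mul_assoc], cancel1,
      mul_assoc, hS2, mul_one]
  have e1 : S * (1 + Q1) * S = Sg + P1 := by
    rw [mul_add, add_mul, mul_one, hSS, hQ1def, key]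
  have e2 : S * (1 - Q2) * S = Sg - P2 := by
    rw [mul_sub, sub_mul, mul_one, hSS, hQ2def, key]
  have e3 : S * (1 + Q2) * S = Sg + P2 := by
    rw [mul_add, add_mul, mul_one, hSS, hQ2def, key]
  have e4 : S * (1 - Q1) * S = Sg - P1 := by
    rw [mul_sub, sub_mul, mul_one, hSS, hQ1def, key]
  have hsim : G = S⁻¹ * G' * S := by
    rw [hG, hG', ← e1, ← e2, ← e3, ← e4]
    simp only [Matrix.mul_inv_rev, mul_assoc]
    simp only [cancel1, cancel2]
  have hspec : spectrum ℂ G = spectrum ℂ G' := by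
    have hcoe : ((hSU.unit⁻¹ : (Matrix (Fin n) (Fin n) ℂ)ˣ) : Matrix (Fin n) (Fin n) ℂ)
        = S⁻¹ := by
      rw [Matrix.coe_units_inv, hSU.unit_spec]
    calc spectrum ℂ G = spectrum ℂ (S⁻¹ * G' * S) := by rw [hsim]
      _ = spectrum ℂ (((hSU.unit⁻¹ : (Matrix (Fin n) (Fin n) ℂ)ˣ) : Matrix (Fin n) (Fin n) ℂ)
            * G' * ((hSU.unit : (Matrix (Fin n) (Fin n) ℂ)ˣ) : Matrix (Fin n) (Fin n) ℂ)) := by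
          rw [hcoe, hSU.unit_spec]
      _ = spectrum ℂ G' := spectrum.units_conjugate'
  -- finish
  have hbound : ∀ μ ∈ spectrum ℂ G', (‖μ‖₊ : ENNReal) < 1 := fun μ hμ =>
    pps_eig_bound hQ1 hQ2 hQA hμ
  show spectralRadius ℂ G < 1
  rw [spectralRadius, hspec]
  rcases (spectrum ℂ G').eq_empty_or_nonempty with he | hne
  · rw [he]
    simp
  · have hfin : (spectrum ℂ G').Finite := Matrix.finite_spectrum G'
    rw [← sSup_image]
    have hmem : sSup ((fun k : ℂ => (‖k‖₊ : ENNReal)) '' spectrum ℂ G')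
        ∈ (fun k : ℂ => (‖k‖₊ : ENNReal)) '' spectrum ℂ G' :=
      (hne.image _).csSup_mem (hfin.image _)
    obtain ⟨μ, hμs, hfμ⟩ := hmem
    rw [← hfμ]
    exact hbound μ hμs
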